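/- p-box conjunction (Fréchet-style lower bound): for every valuation ε, pGCL program s, pDL formulae φ₁, φ₂, and expectation lower bounds p₁, p₂, if ε ⊨ [s]_{p₁} φ₁ and ε ⊨ [s]_{p₂} φ₂, then ε ⊨ [s]_p (φ₁ ∧ φ₂), where p is defined pointwise by p = max(p₁ + p₂ − 1, 0). -/

import Mathlib

/-!
Under a fixed policy every non-final state has at most two successors, reached with
probabilities `q` and `1 - q`; by induction on path length, the terminating paths from a state
therefore carry total probability at most `1`. Summing the pointwise Fréchet inequality
`[φ₁] + [φ₂] ≤ [φ₁ ∧ φ₂] + 1` against the path probabilities gives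
`E_π [φ₁] + E_π [φ₂] ≤ E_π [φ₁ ∧ φ₂] + 1` for every policy `π`, and taking infima over policies
gives `𝔼 [φ₁] + 𝔼 [φ₂] - 1 ≤ 𝔼 [φ₁ ∧ φ₂]`. The bound by `0` is nonnegativity of `𝔼`.
-/

namespace PGCL

/-- Program valuations: maps from program variables to real values. -/
abbrev PVal : Type := String → ℝ

/-- Logical environments: maps from logical variables to their values.
    Logical variables are disjoint from program variables and cannot be
    accessed by programs. -/
abbrev LEnv : Type := String → ℝ

/-- Syntax of the probabilistic guarded command language pGCL.
    Expressions are embedded shallowly as functions of the valuation. -/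
inductive Stmt : Type
  | skip : Stmt
  | assign (x : String) (e : PVal → ℝ) : Stmt
  | seq (s₁ s₂ : Stmt) : Stmt
  /-- demonic (non-deterministic) choice `s₁ ⊓ s₂` -/
  | dem (s₁ s₂ : Stmt) : Stmt
  /-- probabilistic choice `s₁ [e] s₂` -/
  | prob (e : PVal → ℝ) (s₁ s₂ : Stmt) : Stmt
  | ifte (e : PVal → Bool) (s₁ s₂ : Stmt) : Stmt
  | whileLoop (e : PVal → Bool) (s : Stmt) : Stmt

/-- States of the MDP semantics: a valuation paired with the remaining program.
    `(ε, Stmt.skip)` is final. -/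
abbrev PState : Type := PVal × Stmt

/-- A positional policy resolves each demonic choice (true = left branch). -/
abbrev Policy : Type := PState → Bool

/-- One-step transition relation of the MDP semantics of pGCL, under policy `π`:
    `Step π σ p σ'` means σ steps to σ' with probability `p`. -/
inductive Step (π : Policy) : PState → ℝ → PState → Prop
  | assign {ε : PVal} {x : String} {e : PVal → ℝ} :
      Step π (ε, Stmt.assign x e) 1 (Function.update ε x (e ε), Stmt.skip)
  | seqSkip {ε ε' : PVal} {s₁ s₂ : Stmt} {p : ℝ} :
      Step π (ε, s₁) p (ε', s₂) → Step π (ε, Stmt.seq Stmt.skip s₁) p (ε', s₂)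
  | seqStep {ε ε' : PVal} {s₁ s₂ s : Stmt} {p : ℝ} :
      Step π (ε, s₁) p (ε', s₂) → Step π (ε, Stmt.seq s₁ s) p (ε', Stmt.seq s₂ s)
  | probL {ε : PVal} {e : PVal → ℝ} {s₁ s₂ : Stmt} :
      0 ≤ e ε → e ε ≤ 1 → Step π (ε, Stmt.prob e s₁ s₂) (e ε) (ε, s₁)
  | probR {ε : PVal} {e : PVal → ℝ} {s₁ s₂ : Stmt} :
      0 ≤ e ε → e ε ≤ 1 → Step π (ε, Stmt.prob e s₁ s₂) (1 - e ε) (ε, s₂)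
  | demL {ε : PVal} {s₁ s₂ : Stmt} :
      π (ε, Stmt.dem s₁ s₂) = true → Step π (ε, Stmt.dem s₁ s₂) 1 (ε, s₁)
  | demR {ε : PVal} {s₁ s₂ : Stmt} :
      π (ε, Stmt.dem s₁ s₂) = false → Step π (ε, Stmt.dem s₁ s₂) 1 (ε, s₂)
  | iteT {ε : PVal} {e : PVal → Bool} {s₁ s₂ : Stmt} :
      e ε = true → Step π (ε, Stmt.ifte e s₁ s₂) 1 (ε, s₁)
  | iteF {ε : PVal} {e : PVal → Bool} {s₁ s₂ : Stmt} :
      e ε = false → Step π (ε, Stmt.ifte e s₁ s₂) 1 (ε, s₂)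
  | whileT {ε : PVal} {e : PVal → Bool} {s : Stmt} :
      e ε = true →
        Step π (ε, Stmt.whileLoop e s) 1 (ε, Stmt.seq s (Stmt.whileLoop e s))
  | whileF {ε : PVal} {e : PVal → Bool} {s : Stmt} :
      e ε = false → Step π (ε, Stmt.whileLoop e s) 1 (ε, Stmt.skip)

/-- Finite paths under a policy `π` from a state to a final state. -/
inductive MPath (π : Policy) : PState → Type
  | nil (ε : PVal) : MPath π (ε, Stmt.skip)
  | cons {σ σ' : PState} (p : ℝ) (h : Step π σ p σ') (rest : MPath π σ') : MPath π σ

/-- The probability of a path: the product of its transition probabilities. -/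
noncomputable def MPath.prob {π : Policy} : {σ : PState} → MPath π σ → ℝ
  | _, .nil _ => 1
  | _, .cons p _ rest => p * rest.prob

/-- The valuation in the final state of a path. -/
def MPath.finalVal {π : Policy} : {σ : PState} → MPath π σ → PVal
  | _, .nil ε => ε
  | _, .cons _ _ rest => rest.finalVal

/-- Expected reward `E_{σ,π} r`: the sum over all paths from σ under π of the
    probability of the path times the reward of its final valuation. -/
noncomputable def expReward (π : Policy) (σ : PState) (r : PVal → ℝ) : ℝ :=
  ∑' ρ : MPath π σ, ρ.prob * r ρ.finalVal

/-- Expectation `𝔼_σ r`: infimum over all policies of the expected reward. -/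
noncomputable def expectation (σ : PState) (r : PVal → ℝ) : ℝ :=
  ⨅ π : Policy, expReward π σ r

open Classical in
/-- Characteristic (indicator) function of a proposition. -/
noncomputable def ind (P : Prop) : ℝ := if P then 1 else 0

/-- Formulae of probabilistic dynamic logic pDL. Atomic formulae are embedded
    shallowly as predicates over the program valuation and logical environment. -/
inductive Formula : Type
  | atom (A : PVal → LEnv → Prop) : Formula
  | neg (φ : Formula) : Formula
  | conj (φ₁ φ₂ : Formula) : Formula
  /-- universal quantification over the logical variable `l` (domain ℝ) -/
  | all (l : String) (φ : Formula) : Formula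
  /-- the p-box modality `[s]_p φ` -/
  | box (s : Stmt) (p : PVal → ℝ) (φ : Formula) : Formula

/-- Satisfaction `ε, η ⊨ φ` of pDL formulae. -/
def Sat : Formula → PVal → LEnv → Prop
  | .atom A, ε, η => A ε η
  | .neg φ, ε, η => ¬ Sat φ ε η
  | .conj φ₁ φ₂, ε, η => Sat φ₁ ε η ∧ Sat φ₂ ε η
  | .all l φ, ε, η => ∀ v : ℝ, Sat φ ε (Function.update η l v)
  | .box s p φ, ε, η => p ε ≤ expectation (ε, s) (fun ε' => ind (Sat φ ε' η))

/-- Disjunction `φ₁ ∨ φ₂ := ¬(¬φ₁ ∧ ¬φ₂)`. -/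
def Formula.disj (φ₁ φ₂ : Formula) : Formula := .neg (.conj (.neg φ₁) (.neg φ₂))

/-- Existential quantification `∃l·φ := ¬∀l·¬φ`. -/
def Formula.ex (l : String) (φ : Formula) : Formula := .neg (.all l (.neg φ))

/-- A program is purely probabilistic if it contains no demonic choice. -/
def DemFree : Stmt → Prop
  | .skip => True
  | .assign _ _ => True
  | .seq s₁ s₂ => DemFree s₁ ∧ DemFree s₂
  | .dem _ _ => False
  | .prob _ s₁ s₂ => DemFree s₁ ∧ DemFree s₂
  | .ifte _ s₁ s₂ => DemFree s₁ ∧ DemFree s₂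
  | .whileLoop _ s => DemFree s

theorem Step.prob_nonneg {π : Policy} {σ σ' : PState} {p : ℝ} (h : Step π σ p σ') : 0 ≤ p := by
  induction h <;> linarith

theorem Step.exists_binary_branching (π : Policy) (ε : PVal) (s : Stmt) :
    ∃ q ∈ Set.Icc (0 : ℝ) 1, ∃ σ₁ σ₂ : PState,
      ∀ p σ', Step π (ε, s) p σ' → (p, σ') = (q, σ₁) ∨ (p, σ') = (1 - q, σ₂) := by
  have one_mem : (1 : ℝ) ∈ Set.Icc (0 : ℝ) 1 := ⟨zero_le_one, le_rfl⟩
  induction s with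
  | skip => exact ⟨1, one_mem, (ε, .skip), (ε, .skip), fun _ _ h => nomatch h⟩
  | assign x e =>
    refine ⟨1, one_mem, (Function.update ε x (e ε), .skip), (ε, .skip), fun _ _ h => ?_⟩
    cases h; exact .inl rfl
  | seq a b iha ihb =>
    by_cases ha : a = .skip
    · subst ha
      obtain ⟨q, hq, σ₁, σ₂, hb⟩ := ihb
      refine ⟨q, hq, σ₁, σ₂, fun _ _ h => ?_⟩
      cases h with
      | seqSkip h => exact hb _ _ h
      | seqStep h => nomatch h
    · obtain ⟨q, hq, σ₁, σ₂, ha'⟩ := iha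
      refine ⟨q, hq, (σ₁.1, .seq σ₁.2 b), (σ₂.1, .seq σ₂.2 b), fun _ _ h => ?_⟩
      cases h with
      | seqSkip => exact absurd rfl ha
      | seqStep h => rcases ha' _ _ h with hσ | hσ <;> [left; right] <;> cases hσ <;> rfl
  | dem a b =>
    refine ⟨1, one_mem, if π (ε, .dem a b) then (ε, a) else (ε, b), (ε, b), fun _ _ h => ?_⟩
    cases h <;> simp_all
  | prob e a b =>
    by_cases he : e ε ∈ Set.Icc (0 : ℝ) 1
    · refine ⟨e ε, he, (ε, a), (ε, b), fun _ _ h => ?_⟩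
      cases h <;> simp
    · refine ⟨1, one_mem, (ε, a), (ε, b), fun _ _ h => ?_⟩
      cases h <;> simp_all
  | ifte e a b =>
    refine ⟨1, one_mem, if e ε then (ε, a) else (ε, b), (ε, b), fun _ _ h => ?_⟩
    cases h <;> simp_all
  | whileLoop e a =>
    refine ⟨1, one_mem, if e ε then (ε, .seq a (.whileLoop e a)) else (ε, .skip), (ε, .skip),
      fun _ _ h => ?_⟩
    cases h <;> simp_all

section Paths

variable {π : Policy}

def MPath.len : {σ : PState} → MPath π σ → ℕ
  | _, .nil _ => 0
  | _, .cons _ _ rest => rest.len + 1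

def MPath.firstStep : {σ : PState} → MPath π σ → Option (ℝ × PState)
  | _, .nil _ => none
  | _, @MPath.cons _ _ σ' p _ _ => some (p, σ')

theorem MPath.prob_nonneg {σ : PState} (ρ : MPath π σ) : 0 ≤ ρ.prob := by
  induction ρ with
  | nil => exact zero_le_one
  | cons p h rest ih => exact mul_nonneg h.prob_nonneg ih

theorem MPath.eq_nil {ε : PVal} (ρ : MPath π (ε, .skip)) : ρ = .nil ε := by
  cases ρ with
  | nil => rfl
  | cons p h rest => nomatch h

theorem MPath.cons_injective {σ σ' : PState} {p : ℝ} (h : Step π σ p σ') :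
    Function.Injective (MPath.cons p h : MPath π σ' → MPath π σ) := by
  intro ρ ρ' hρ
  cases hρ
  rfl

theorem MPath.firstStep_eq_some_iff {σ σ' : PState} {p : ℝ} (ρ : MPath π σ) :
    ρ.firstStep = some (p, σ') ↔ ∃ h : Step π σ p σ', ρ ∈ Set.range (MPath.cons p h) := by
  cases ρ with
  | nil => simp [MPath.firstStep]
  | cons p' h' rest =>
    constructor
    · intro hs
      simp only [MPath.firstStep, Option.some.injEq, Prod.mk.injEq] at hs
      obtain ⟨rfl, rfl⟩ := hs
      exact ⟨h', rest, rfl⟩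
    · rintro ⟨h, rest', hρ⟩
      cases hρ
      rfl

theorem MPath.firstStep_eq_or_eq {ε : PVal} {s : Stmt} {q₁ q₂ : ℝ} {σ₁ σ₂ : PState}
    (hs : s ≠ .skip)
    (hsteps : ∀ p σ', Step π (ε, s) p σ' → (p, σ') = (q₁, σ₁) ∨ (p, σ') = (q₂, σ₂))
    (ρ : MPath π (ε, s)) : ρ.firstStep = some (q₁, σ₁) ∨ ρ.firstStep = some (q₂, σ₂) := by
  cases ρ with
  | nil => exact absurd rfl hs
  | cons p h rest => rcases hsteps _ _ h with hσ | hσ <;> simp [MPath.firstStep, hσ]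

open Classical in
theorem MPath.sum_prob_filter_firstStep_le {σ σ' : PState} {p : ℝ} (hp : 0 ≤ p)
    (F : Finset (MPath π σ))
    (hrest : ∀ h : Step π σ p σ',
      ∑ ρ ∈ F.preimage (MPath.cons p h) (MPath.cons_injective h).injOn, ρ.prob ≤ 1) :
    ∑ ρ ∈ F with ρ.firstStep = some (p, σ'), ρ.prob ≤ p := by
  by_cases h : Step π σ p σ'
  · have hfilter : F.filter (·.firstStep = some (p, σ')) =
        F.filter (· ∈ Set.range (MPath.cons p h)) := by
      ext ρ
      simp only [Finset.mem_filter, MPath.firstStep_eq_some_iff, exists_prop_of_true h]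
    calc ∑ ρ ∈ F with ρ.firstStep = some (p, σ'), ρ.prob
        = ∑ ρ ∈ F.preimage (MPath.cons p h) (MPath.cons_injective h).injOn,
            (MPath.cons p h ρ).prob := by rw [hfilter, Finset.sum_preimage']
      _ = p * ∑ ρ ∈ F.preimage (MPath.cons p h) (MPath.cons_injective h).injOn, ρ.prob := by
        simp only [MPath.prob, Finset.mul_sum]
      _ ≤ p := mul_le_of_le_one_right hp (hrest h)
  · have hempty : F.filter (·.firstStep = some (p, σ')) = ∅ :=
      Finset.filter_eq_empty_iff.2 fun ρ _ hρ => h ((MPath.firstStep_eq_some_iff ρ).1 hρ).1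
    rw [hempty, Finset.sum_empty]
    exact hp

theorem MPath.sum_prob_le_one_of_len_lt :
    ∀ (n : ℕ) {σ : PState} (F : Finset (MPath π σ)), (∀ ρ ∈ F, ρ.len < n) →
      ∑ ρ ∈ F, ρ.prob ≤ 1
  | 0, _, F, hF => by
    rw [Finset.eq_empty_of_forall_notMem fun ρ hρ => Nat.not_lt_zero _ (hF ρ hρ),
      Finset.sum_empty]
    exact zero_le_one
  | n + 1, (ε, s), F, hF => by
    classical
    by_cases hs : s = .skip
    · subst hs
      calc ∑ ρ ∈ F, ρ.prob ≤ ∑ ρ ∈ {MPath.nil ε}, ρ.prob :=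
            Finset.sum_le_sum_of_subset_of_nonneg (fun ρ _ => by simp [ρ.eq_nil])
              fun ρ _ _ => ρ.prob_nonneg
        _ = 1 := by simp [MPath.prob]
    obtain ⟨q, hq, σ₁, σ₂, hsteps⟩ := Step.exists_binary_branching π ε s
    have hrest : ∀ p σ' (h : Step π (ε, s) p σ'),
        ∑ ρ ∈ F.preimage (MPath.cons p h) (MPath.cons_injective h).injOn, ρ.prob ≤ 1 :=
      fun p σ' h => sum_prob_le_one_of_len_lt n _ fun ρ hρ =>
        Nat.lt_of_succ_lt_succ (hF _ (Finset.mem_preimage.1 hρ))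
    have hsecond : ∑ ρ ∈ F with ¬ρ.firstStep = some (q, σ₁), ρ.prob ≤
        ∑ ρ ∈ F with ρ.firstStep = some (1 - q, σ₂), ρ.prob :=
      Finset.sum_le_sum_of_subset_of_nonneg
        (Finset.monotone_filter_right F fun ρ _ hρ =>
          (MPath.firstStep_eq_or_eq hs hsteps ρ).resolve_left hρ)
        fun ρ _ _ => ρ.prob_nonneg
    rw [← Finset.sum_filter_add_sum_filter_not F (·.firstStep = some (q, σ₁))]
    linarith [MPath.sum_prob_filter_firstStep_le hq.1 F (hrest q σ₁),
      MPath.sum_prob_filter_firstStep_le (sub_nonneg.2 hq.2) F (hrest (1 - q) σ₂)]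

theorem MPath.sum_prob_le_one {σ : PState} (F : Finset (MPath π σ)) : ∑ ρ ∈ F, ρ.prob ≤ 1 :=
  MPath.sum_prob_le_one_of_len_lt (F.sup MPath.len + 1) F fun _ hρ =>
    Nat.lt_succ_of_le (Finset.le_sup hρ)

theorem MPath.summable_prob (σ : PState) : Summable fun ρ : MPath π σ => ρ.prob :=
  summable_of_sum_le (fun ρ => ρ.prob_nonneg) MPath.sum_prob_le_one

theorem MPath.tsum_prob_le_one (σ : PState) : ∑' ρ : MPath π σ, ρ.prob ≤ 1 :=
  Real.tsum_le_of_sum_le (fun ρ => ρ.prob_nonneg) MPath.sum_prob_le_one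

end Paths

theorem ind_mem_Icc (P : Prop) : ind P ∈ Set.Icc (0 : ℝ) 1 := by
  unfold ind; split_ifs <;> norm_num

theorem ind_add_ind_le (P Q : Prop) : ind P + ind Q ≤ ind (P ∧ Q) + 1 := by
  unfold ind; split_ifs <;> simp_all

section Rewards

variable {σ : PState} {r r₁ r₂ : PVal → ℝ}

theorem summable_prob_mul_reward (π : Policy) (hr : ∀ ε, r ε ∈ Set.Icc (0 : ℝ) 1) :
    Summable fun ρ : MPath π σ => ρ.prob * r ρ.finalVal :=
  (MPath.summable_prob σ).of_nonneg_of_le (fun ρ => mul_nonneg ρ.prob_nonneg (hr _).1)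
    fun ρ => mul_le_of_le_one_right ρ.prob_nonneg (hr _).2

theorem expReward_nonneg (π : Policy) (hr : ∀ ε, 0 ≤ r ε) : 0 ≤ expReward π σ r :=
  tsum_nonneg fun ρ => mul_nonneg ρ.prob_nonneg (hr _)

theorem expReward_add_le_add_one (π : Policy) (hr₁ : ∀ ε, r₁ ε ∈ Set.Icc (0 : ℝ) 1)
    (hr₂ : ∀ ε, r₂ ε ∈ Set.Icc (0 : ℝ) 1) (hr : ∀ ε, r ε ∈ Set.Icc (0 : ℝ) 1)
    (h : ∀ ε, r₁ ε + r₂ ε ≤ r ε + 1) :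
    expReward π σ r₁ + expReward π σ r₂ ≤ expReward π σ r + 1 := by
  have hsum₁ := summable_prob_mul_reward (σ := σ) π hr₁
  have hsum₂ := summable_prob_mul_reward (σ := σ) π hr₂
  have hsum := summable_prob_mul_reward (σ := σ) π hr
  calc expReward π σ r₁ + expReward π σ r₂
      = ∑' ρ : MPath π σ, (ρ.prob * r₁ ρ.finalVal + ρ.prob * r₂ ρ.finalVal) :=
        (hsum₁.tsum_add hsum₂).symm
    _ ≤ ∑' ρ : MPath π σ, (ρ.prob * r ρ.finalVal + ρ.prob) :=
        (hsum₁.add hsum₂).tsum_le_tsum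
          (fun ρ => by simpa [mul_add] using mul_le_mul_of_nonneg_left (h _) ρ.prob_nonneg)
          (hsum.add (MPath.summable_prob σ))
    _ = expReward π σ r + ∑' ρ : MPath π σ, ρ.prob := hsum.tsum_add (MPath.summable_prob σ)
    _ ≤ expReward π σ r + 1 := by grw [MPath.tsum_prob_le_one σ]

theorem expectation_nonneg (hr : ∀ ε, 0 ≤ r ε) : 0 ≤ expectation σ r :=
  le_ciInf fun π => expReward_nonneg π hr

theorem expectation_le_expReward (π : Policy) (hr : ∀ ε, 0 ≤ r ε) :
    expectation σ r ≤ expReward π σ r :=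
  ciInf_le ⟨0, Set.forall_mem_range.2 fun π => expReward_nonneg π hr⟩ π

theorem expectation_add_le_add_one (hr₁ : ∀ ε, r₁ ε ∈ Set.Icc (0 : ℝ) 1)
    (hr₂ : ∀ ε, r₂ ε ∈ Set.Icc (0 : ℝ) 1) (hr : ∀ ε, r ε ∈ Set.Icc (0 : ℝ) 1)
    (h : ∀ ε, r₁ ε + r₂ ε ≤ r ε + 1) :
    expectation σ r₁ + expectation σ r₂ ≤ expectation σ r + 1 := by
  suffices expectation σ r₁ + expectation σ r₂ - 1 ≤ expectation σ r by linarith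
  refine le_ciInf fun π => ?_
  linarith [expectation_le_expReward (σ := σ) π fun ε => (hr₁ ε).1,
    expectation_le_expReward (σ := σ) π fun ε => (hr₂ ε).1,
    expReward_add_le_add_one (σ := σ) π hr₁ hr₂ hr h]

end Rewards

end PGCL

open PGCL

theorem pbox_conjunction_general (ε : PVal) (η : LEnv) (s : Stmt) (φ₁ φ₂ : Formula)
    (p₁ p₂ : PVal → ℝ)
    (h₁ : Sat (.box s p₁ φ₁) ε η) (h₂ : Sat (.box s p₂ φ₂) ε η) :
    Sat (.box s (fun ε' => max (p₁ ε' + p₂ ε' - 1) 0) (.conj φ₁ φ₂)) ε η := by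
  have hfrechet := expectation_add_le_add_one (σ := (ε, s))
    (fun _ => ind_mem_Icc _) (fun _ => ind_mem_Icc _) (fun _ => ind_mem_Icc _)
    fun ε' => ind_add_ind_le (Sat φ₁ ε' η) (Sat φ₂ ε' η)
  simp only [Sat] at h₁ h₂ ⊢
  exact max_le (by linarith) (expectation_nonneg fun _ => (ind_mem_Icc _).1)

/-- p-box conjunction (Fréchet-style lower bound). -/
theorem pbox_conjunction (ε : PVal) (η : LEnv) (s : Stmt) (φ₁ φ₂ : Formula)
    (p₁ p₂ : PVal → ℝ)
    (hp₁ : ∀ ε', p₁ ε' ∈ Set.Icc (0 : ℝ) 1) (hp₂ : ∀ ε', p₂ ε' ∈ Set.Icc (0 : ℝ) 1)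
    (h₁ : Sat (.box s p₁ φ₁) ε η) (h₂ : Sat (.box s p₂ φ₂) ε η) :
    Sat (.box s (fun ε' => max (p₁ ε' + p₂ ε' - 1) 0) (.conj φ₁ φ₂)) ε η :=
  pbox_conjunction_general ε η s φ₁ φ₂ p₁ p₂ h₁ h₂
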